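/- Let M be a CMAEM, let s be a state of M, and let Δ be a set of formulas of L such that M,s ⊨ ψ for every ψ ∈ Δ and ¬D_A φ ∈ Δ for some nonempty A ⊆ Σ. Then there exists a state t of M such that (s,t) ∈ R^D_A and M,t ⊨ χ for every χ in the set {¬φ} ∪ {D_{A'} ψ : D_{A'} ψ ∈ Δ, ∅ ≠ A' ⊆ A} ∪ {¬D_{A'} ψ : ¬D_{A'} ψ ∈ Δ, ∅ ≠ A' ⊆ A}. -/

import Mathlib

open Classical

/-- A coalition: a nonempty set of agents. -/
abbrev Coalition (Agent : Type) := {A : Set Agent // A.Nonempty}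

/-- The singleton coalition `{a}`. -/
def single {Agent : Type} (a : Agent) : Coalition Agent :=
  ⟨{a}, Set.singleton_nonempty a⟩

/-- Formulas of the language `L`:
`φ ::= p | ¬φ | φ₁ ∧ φ₂ | D_A φ | C_A φ` with `A` a nonempty coalition. -/
inductive Formula (Agent AP : Type) : Type
  | atom : AP → Formula Agent AP
  | neg  : Formula Agent AP → Formula Agent AP
  | and  : Formula Agent AP → Formula Agent AP → Formula Agent AP
  | D    : Coalition Agent → Formula Agent AP → Formula Agent AP
  | C    : Coalition Agent → Formula Agent AP → Formula Agent AP

/-- A coalitional multiagent epistemic structure (CMAES): a nonempty set of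
states with relations `R^D_A` and `R^C_A` for every nonempty coalition `A`,
where `R^C_A` is the reflexive transitive closure of the union of the
relations `R^D_{A'}` over all nonempty `A' ⊆ A`. -/
structure CMAES (Agent : Type) where
  State : Type
  state_nonempty : Nonempty State
  RD : Coalition Agent → State → State → Prop
  RC : Coalition Agent → State → State → Prop
  RC_eq : ∀ A : Coalition Agent, RC A =
    Relation.ReflTransGen (fun s t => ∃ A' : Coalition Agent, A'.1 ⊆ A.1 ∧ RD A' s t)

/-- A pseudo-CMAEF: every `R^D_A` is an equivalence relation and
`R^D_A ⊆ R^D_B` whenever `∅ ≠ B ⊆ A`. -/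
def CMAES.IsPseudoFrame {Agent : Type} (G : CMAES Agent) : Prop :=
  (∀ A : Coalition Agent, Equivalence (G.RD A)) ∧
  (∀ A B : Coalition Agent, B.1 ⊆ A.1 → ∀ s t, G.RD A s t → G.RD B s t)

/-- A (genuine) CMAEF: every `R^D_A` is an equivalence relation and
`R^D_A = ⋂_{a ∈ A} R^D_{{a}}`. -/
def CMAES.IsFrame {Agent : Type} (G : CMAES Agent) : Prop :=
  (∀ A : Coalition Agent, Equivalence (G.RD A)) ∧
  (∀ (A : Coalition Agent) (s t : G.State), G.RD A s t ↔ ∀ a ∈ A.1, G.RD (single a) s t)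

/-- A CMAES equipped with a labeling of states by sets of atomic propositions. -/
structure CMAEModel (Agent AP : Type) extends CMAES Agent where
  label : State → Set AP

/-- The satisfaction relation. -/
def CMAEModel.Sat {Agent AP : Type} (M : CMAEModel Agent AP) :
    Formula Agent AP → M.State → Prop
  | .atom p, s => p ∈ M.label s
  | .neg φ, s => ¬ M.Sat φ s
  | .and φ ψ, s => M.Sat φ s ∧ M.Sat ψ s
  | .D A φ, s => ∀ t, M.RD A s t → M.Sat φ t
  | .C A φ, s => ∀ t, M.RC A s t → M.Sat φ t

/-- `M` is a pseudo-CMAEM. -/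
def CMAEModel.IsPseudo {Agent AP : Type} (M : CMAEModel Agent AP) : Prop :=
  M.toCMAES.IsPseudoFrame

/-- `M` is a (genuine) CMAEM. -/
def CMAEModel.IsGenuine {Agent AP : Type} (M : CMAEModel Agent AP) : Prop :=
  M.toCMAES.IsFrame

/-- `θ` is satisfiable in a pseudo-CMAEM. -/
def SatisfiableInPseudo (Agent AP : Type) (θ : Formula Agent AP) : Prop :=
  ∃ M : CMAEModel Agent AP, M.IsPseudo ∧ ∃ s : M.State, M.Sat θ s

/-- `θ` is satisfiable in a CMAEM. -/
def SatisfiableInCMAEM (Agent AP : Type) (θ : Formula Agent AP) : Prop :=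
  ∃ M : CMAEModel Agent AP, M.IsGenuine ∧ ∃ s : M.State, M.Sat θ s
/-- A set of formulas is fully expanded. -/
def FullyExpanded {Agent AP : Type} (Δ : Set (Formula Agent AP)) : Prop :=
  (∀ φ, Formula.neg (Formula.neg φ) ∈ Δ → φ ∈ Δ) ∧
  (∀ φ ψ, Formula.and φ ψ ∈ Δ → φ ∈ Δ ∧ ψ ∈ Δ) ∧
  (∀ φ ψ, Formula.neg (Formula.and φ ψ) ∈ Δ → Formula.neg φ ∈ Δ ∨ Formula.neg ψ ∈ Δ) ∧
  (∀ (A A' : Coalition Agent) (φ : Formula Agent AP),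
      Formula.D A φ ∈ Δ → A.1 ⊆ A'.1 → Formula.D A' φ ∈ Δ) ∧
  (∀ (A : Coalition Agent) (φ : Formula Agent AP), Formula.D A φ ∈ Δ → φ ∈ Δ) ∧
  (∀ (A : Coalition Agent) (φ : Formula Agent AP), Formula.C A φ ∈ Δ →
      ∀ a ∈ A.1, Formula.D (single a) (Formula.and φ (Formula.C A φ)) ∈ Δ) ∧
  (∀ (A : Coalition Agent) (φ : Formula Agent AP), Formula.neg (Formula.C A φ) ∈ Δ →
      ∃ a ∈ A.1, Formula.neg (Formula.D (single a) (Formula.and φ (Formula.C A φ))) ∈ Δ) ∧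
  (∀ (A B : Coalition Agent) (φ : Formula Agent AP) (h : (A.1 ∩ B.1).Nonempty),
      Formula.neg (Formula.D A (Formula.neg (Formula.D B φ))) ∈ Δ →
      Formula.D ⟨A.1 ∩ B.1, h⟩ φ ∈ Δ)

/-- `H` is a Hintikka labeling of the CMAES `G`, i.e. `(G, H)` is a CMAEHS:
conditions (H1)-(H5). -/
def IsHintikka {Agent AP : Type} (G : CMAES Agent)
    (H : G.State → Set (Formula Agent AP)) : Prop :=
  (∀ s φ, Formula.neg φ ∈ H s → φ ∉ H s) ∧
  (∀ s, FullyExpanded (H s)) ∧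
  (∀ s (A : Coalition Agent) φ, Formula.neg (Formula.D A φ) ∈ H s →
      ∃ t, G.RD A s t ∧ Formula.neg φ ∈ H t) ∧
  (∀ s t (A : Coalition Agent), G.RD A s t →
      ∀ A' : Coalition Agent, A'.1 ⊆ A.1 →
      ∀ φ, (Formula.D A' φ ∈ H s ↔ Formula.D A' φ ∈ H t)) ∧
  (∀ s (A : Coalition Agent) φ, Formula.neg (Formula.C A φ) ∈ H s →
      ∃ t, G.RC A s t ∧ Formula.neg φ ∈ H t)

/-- There exists a coalitional multiagent epistemic Hintikka structure for `θ`. -/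
def ExistsHintikkaFor (Agent AP : Type) (θ : Formula Agent AP) : Prop :=
  ∃ (G : CMAES Agent) (H : G.State → Set (Formula Agent AP)),
    IsHintikka G H ∧ ∃ s : G.State, θ ∈ H s
/-- A set of formulas is patently inconsistent if it contains a pair `φ, ¬φ`. -/
def PatentlyInconsistent {Agent AP : Type} (Δ : Set (Formula Agent AP)) : Prop :=
  ∃ φ, φ ∈ Δ ∧ Formula.neg φ ∈ Δ

/-- `Δ` is a minimal fully expanded extension of `Γ`. -/
def MinFEE {Agent AP : Type} (Γ Δ : Set (Formula Agent AP)) : Prop :=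
  FullyExpanded Δ ∧ Γ ⊆ Δ ∧ ¬ ∃ Δ', FullyExpanded Δ' ∧ Γ ⊆ Δ' ∧ Δ' ⊂ Δ

/-- The prestate created by rule (DR) from a state `Δ` containing `¬D_A φ`:
`{¬φ} ∪ {D_{A'}ψ ∈ Δ : ∅ ≠ A' ⊆ A} ∪ {¬D_{A'}ψ ∈ Δ : ∅ ≠ A' ⊆ A}`. -/
def drSucc {Agent AP : Type} (Δ : Set (Formula Agent AP)) (A : Coalition Agent)
    (φ : Formula Agent AP) : Set (Formula Agent AP) :=
  {Formula.neg φ} ∪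
  {ψ | ψ ∈ Δ ∧ ∃ (A' : Coalition Agent) (χ : Formula Agent AP),
      A'.1 ⊆ A.1 ∧ ψ = Formula.D A' χ} ∪
  {ψ | ψ ∈ Δ ∧ ∃ (A' : Coalition Agent) (χ : Formula Agent AP),
      A'.1 ⊆ A.1 ∧ ψ = Formula.neg (Formula.D A' χ)}

mutual
/-- The prestates of the pretableau `P^θ`: the initial prestate `{θ}` and the
prestates obtained by applying rule (DR) to states. -/
inductive TabPrestate {Agent AP : Type} (θ : Formula Agent AP) :
    Set (Formula Agent AP) → Prop
  | init : TabPrestate θ {θ}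
  | dr {Δ : Set (Formula Agent AP)} {A : Coalition Agent} {φ : Formula Agent AP} :
      TabState θ Δ → ¬ PatentlyInconsistent Δ → Formula.neg (Formula.D A φ) ∈ Δ →
      TabPrestate θ (drSucc Δ A φ)

/-- The states of the pretableau `P^θ`: all minimal fully expanded extensions of
prestates, obtained by rule (SR). -/
inductive TabState {Agent AP : Type} (θ : Formula Agent AP) :
    Set (Formula Agent AP) → Prop
  | sr {Γ Δ : Set (Formula Agent AP)} : TabPrestate θ Γ → MinFEE Γ Δ → TabState θ Δ
end

/-- The edges of the initial tableau `T_0^θ` (after prestate elimination):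
`Δ --χ--> Δ'` where `χ = ¬D_A φ ∈ Δ`, rule (DR) was applicable to `Δ`, and
`Δ'` is a minimal fully expanded extension of the (DR)-prestate of `Δ` and `χ`. -/
def TabEdge {Agent AP : Type} (θ : Formula Agent AP)
    (Δ : Set (Formula Agent AP)) (χ : Formula Agent AP)
    (Δ' : Set (Formula Agent AP)) : Prop :=
  TabState θ Δ ∧ ¬ PatentlyInconsistent Δ ∧
  ∃ (A : Coalition Agent) (φ : Formula Agent AP),
    χ = Formula.neg (Formula.D A φ) ∧ χ ∈ Δ ∧ MinFEE (drSucc Δ A φ) Δ'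

/-- The eventuality `¬C_A φ` is realized at `Δ` within the set `S` of tableau
states: `¬φ ∈ Δ`, or there is a finite path of tableau states inside `S`,
starting at `Δ`, whose edges are marked by formulas `¬D_B ψ` with `B ⊆ A`,
and ending in a state containing `¬φ`. -/
def RealizedIn {Agent AP : Type} (θ : Formula Agent AP)
    (S : Set (Set (Formula Agent AP))) (Δ : Set (Formula Agent AP))
    (A : Coalition Agent) (φ : Formula Agent AP) : Prop :=
  ∃ Δm, Relation.ReflTransGen
      (fun Δ₁ Δ₂ => Δ₁ ∈ S ∧ Δ₂ ∈ S ∧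
        ∃ (B : Coalition Agent) (ψ : Formula Agent AP), B.1 ⊆ A.1 ∧
          TabEdge θ Δ₁ (Formula.neg (Formula.D B ψ)) Δ₂)
      Δ Δm ∧ Formula.neg φ ∈ Δm

/-- A set `S` of tableau states that survives the state elimination rules
(E1)-(E3): every member is a state of the initial tableau, is not patently
inconsistent (E1), has, for each `¬D_A φ` it contains, a `¬D_A φ`-marked
successor inside `S` (E2), and realizes inside `S` each eventuality `¬C_A φ`
it contains (E3). -/
def GoodSet {Agent AP : Type} (θ : Formula Agent AP)
    (S : Set (Set (Formula Agent AP))) : Prop :=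
  (∀ Δ ∈ S, TabState θ Δ) ∧
  (∀ Δ ∈ S, ¬ PatentlyInconsistent Δ) ∧
  (∀ Δ ∈ S, ∀ (A : Coalition Agent) (φ : Formula Agent AP),
      Formula.neg (Formula.D A φ) ∈ Δ →
      ∃ Δ' ∈ S, TabEdge θ Δ (Formula.neg (Formula.D A φ)) Δ') ∧
  (∀ Δ ∈ S, ∀ (A : Coalition Agent) (φ : Formula Agent AP),
      Formula.neg (Formula.C A φ) ∈ Δ → RealizedIn θ S Δ A φ)

/-- The set of states of the final tableau `T^θ`.  Since the result of the
state elimination phase does not depend on the order of rule applications, it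
is the greatest set of states of the initial tableau closed under the
conditions enforced by the elimination rules (E1)-(E3), i.e. the union of all
such sets. -/
def FinalStates {Agent AP : Type} (θ : Formula Agent AP) :
    Set (Set (Formula Agent AP)) :=
  ⋃₀ {S | GoodSet θ S}

/-- The final tableau `T^θ` is open: some remaining state contains `θ`. -/
def TableauOpen {Agent AP : Type} (θ : Formula Agent AP) : Prop :=
  ∃ Δ ∈ FinalStates θ, θ ∈ Δ

theorem CMAES.IsFrame.isPseudoFrame {Agent : Type} {G : CMAES Agent} (hG : G.IsFrame) :
    G.IsPseudoFrame :=
  ⟨hG.1, fun A B hBA s t hst =>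
    (hG.2 B s t).2 fun a ha => (hG.2 A s t).1 hst a (hBA ha)⟩

theorem CMAEModel.IsGenuine.isPseudo {Agent AP : Type} {M : CMAEModel Agent AP}
    (hM : M.IsGenuine) : M.IsPseudo :=
  CMAES.IsFrame.isPseudoFrame hM

theorem CMAEModel.IsPseudo.sat_D_iff_of_RD {Agent AP : Type} {M : CMAEModel Agent AP}
    (hM : M.IsPseudo) {A A' : Coalition Agent} (hA' : A'.1 ⊆ A.1) {s t : M.State}
    (hst : M.RD A s t) (ψ : Formula Agent AP) :
    M.Sat (.D A' ψ) s ↔ M.Sat (.D A' ψ) t := by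
  have hst' : M.RD A' s t := hM.2 A A' hA' s t hst
  have hequiv := hM.1 A'
  exact ⟨fun h u htu => h u (hequiv.trans hst' htu),
    fun h u hsu => h u (hequiv.trans (hequiv.symm hst') hsu)⟩

/-- (Soundness of rule (DR).)  If all members of `Δ` are
true at a state `s` of a CMAEM `M` and `¬D_A φ ∈ Δ`, then there is a state `t`
with `(s,t) ∈ R^D_A` at which every formula in
`{¬φ} ∪ {D_{A'}ψ ∈ Δ : ∅ ≠ A' ⊆ A} ∪ {¬D_{A'}ψ ∈ Δ : ∅ ≠ A' ⊆ A}` is true. -/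
theorem DR_sound {Agent AP : Type} [Fintype Agent] [Nonempty Agent]
    (M : CMAEModel Agent AP) (hM : M.IsGenuine) (s : M.State)
    (Δ : Set (Formula Agent AP)) (hΔ : ∀ ψ ∈ Δ, M.Sat ψ s)
    (A : Coalition Agent) (φ : Formula Agent AP)
    (hmem : Formula.neg (Formula.D A φ) ∈ Δ) :
    ∃ t : M.State, M.RD A s t ∧ ∀ χ ∈ drSucc Δ A φ, M.Sat χ t := by
  have hnD : ¬ ∀ t, M.RD A s t → M.Sat φ t := hΔ _ hmem
  push Not at hnD
  obtain ⟨t, hst, hnφ⟩ := hnD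
  have hM' : M.IsPseudo := hM.isPseudo
  refine ⟨t, hst, ?_⟩
  rintro χ ((rfl | ⟨hχ, A', ψ, hA', rfl⟩) | ⟨hχ, A', ψ, hA', rfl⟩)
  · exact hnφ
  · exact (hM'.sat_D_iff_of_RD hA' hst ψ).1 (hΔ _ hχ)
  · exact mt (hM'.sat_D_iff_of_RD hA' hst ψ).2 (hΔ _ hχ)
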